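/- The canonical parametrisation of the Dirichlet family is unique: if A, A' ∈ [0,∞)^{k×k} each have at least one zero in every column, c, c' are strictly positive vectors in the simplex, and σ(A ln(kq) + ln c) = σ(A' ln(kq) + ln c') for all q in the interior of the probability simplex (k ≥ 2), then A = A' and c = c'. -/

import Mathlib

noncomputable def softmax {k : ℕ} (z : Fin k → ℝ) : Fin k → ℝ :=
  fun i => Real.exp (z i) / ∑ j, Real.exp (z j)

/-!
Softmax forgets exactly an additive constant, and `ln (k q) = 0` at the uniform `q`, so the
two offsets `ln c`, `ln c'` coincide up to a constant and hence `c = c'`. After that, each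
difference `r` of two rows of `A - A'` satisfies `r ⬝ᵥ ln (k q) = 0` on the open simplex.
Taking `q = softmax (± e_j)` gives `ln (k q) = ± e_j + (ln k - ln (e^{±1} + k - 1)) • 1`, and
since `(e + k - 1)(e⁻¹ + k - 1) > k²` the two constants do not cancel, forcing `r = 0`. So
the columns of `A - A'` are constant, and a zero in every column of `A` and of `A'` pins
that constant to zero.
-/

open Matrix

lemma sum_exp_pos {k : ℕ} (z : Fin k → ℝ) (i : Fin k) : 0 < ∑ j, Real.exp (z j) :=
  Finset.sum_pos (fun _ _ => Real.exp_pos _) ⟨i, Finset.mem_univ i⟩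

lemma softmax_apply {k : ℕ} (z : Fin k → ℝ) (i : Fin k) :
    softmax z i = Real.exp (z i - Real.log (∑ j, Real.exp (z j))) := by
  rw [Real.exp_sub, Real.exp_log (sum_exp_pos z i)]
  rfl

lemma softmax_pos {k : ℕ} (z : Fin k → ℝ) (i : Fin k) : 0 < softmax z i :=
  div_pos (Real.exp_pos _) (sum_exp_pos z i)

lemma sum_softmax {k : ℕ} [NeZero k] (z : Fin k → ℝ) : ∑ i, softmax z i = 1 := by
  simp only [softmax, ← Finset.sum_div]
  exact div_self (sum_exp_pos z 0).ne'

lemma softmax_log {k : ℕ} {c : Fin k → ℝ} (hc : ∀ i, 0 < c i) (hcs : ∑ i, c i = 1) :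
    softmax (fun i => Real.log (c i)) = c := by
  funext i
  simp [softmax, Real.exp_log, hc, hcs]

lemma exists_eq_add_const_of_softmax_eq {k : ℕ} {z z' : Fin k → ℝ}
    (h : softmax z = softmax z') : ∃ a : ℝ, ∀ i, z i = z' i + a := by
  refine ⟨Real.log (∑ j, Real.exp (z j)) - Real.log (∑ j, Real.exp (z' j)), fun i => ?_⟩
  have hi := congrFun h i
  rw [softmax_apply, softmax_apply] at hi
  linarith [Real.exp_injective hi]

lemma log_mul_softmax {k : ℕ} (v : Fin k → ℝ) (i : Fin k) :
    Real.log (k * softmax v i) = v i + (Real.log k - Real.log (∑ j, Real.exp (v j))) := by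
  have hk : (k : ℝ) ≠ 0 := by exact_mod_cast (Fin.pos i).ne'
  rw [softmax_apply, Real.log_mul hk (Real.exp_ne_zero _), Real.log_exp]
  ring

lemma dotProduct_log_mul_softmax {k : ℕ} (r v : Fin k → ℝ) :
    r ⬝ᵥ (fun i => Real.log (k * softmax v i)) =
      r ⬝ᵥ v + (∑ i, r i) * (Real.log k - Real.log (∑ j, Real.exp (v j))) := by
  simp only [log_mul_softmax, dotProduct, mul_add, Finset.sum_add_distrib, Finset.sum_mul]

lemma sum_exp_single {k : ℕ} (j : Fin k) (t : ℝ) :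
    ∑ i, Real.exp ((Pi.single j t : Fin k → ℝ) i) = Real.exp t + (k - 1) := by
  have h : ∀ i, Real.exp ((Pi.single j t : Fin k → ℝ) i) =
      (Pi.single j (Real.exp t - 1) : Fin k → ℝ) i + 1 := by
    intro i
    rcases eq_or_ne i j with rfl | hij <;> simp [*]
  simp only [h, Finset.sum_add_distrib, Finset.sum_pi_single', Finset.mem_univ, if_true,
    Finset.sum_const, Finset.card_univ, Fintype.card_fin, nsmul_eq_mul, mul_one]
  ring

lemma sq_lt_exp_add_mul_exp_neg_add {m : ℝ} (hm : 0 < m) :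
    (m + 1) ^ 2 < (Real.exp 1 + m) * (Real.exp (-1) + m) := by
  have h2 : 2 < Real.exp 1 + Real.exp (-1) := by
    linarith [Real.add_one_lt_exp (one_ne_zero : (1:ℝ) ≠ 0), Real.exp_pos (-1)]
  have h1 : Real.exp 1 * Real.exp (-1) = 1 := by rw [← Real.exp_add]; simp
  nlinarith

lemma eq_zero_of_dotProduct_log_eq_zero {k : ℕ} (hk : 2 ≤ k) (r : Fin k → ℝ)
    (hr : ∀ q : Fin k → ℝ, (∀ i, 0 < q i) → ∑ i, q i = 1 →
      r ⬝ᵥ (fun i => Real.log (k * q i)) = 0) : r = 0 := by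
  have : NeZero k := ⟨by omega⟩
  have hsingle : ∀ j t,
      r j * t + (∑ i, r i) * (Real.log k - Real.log (Real.exp t + (k - 1))) = 0 := by
    intro j t
    have := hr _ (softmax_pos (Pi.single j t)) (sum_softmax _)
    rwa [dotProduct_log_mul_softmax, sum_exp_single, dotProduct_single] at this
  have hgap : 2 * Real.log k <
      Real.log (Real.exp 1 + (k - 1)) + Real.log (Real.exp (-1) + (k - 1)) := by
    have hm : (0 : ℝ) < k - 1 := by
      have : (2 : ℝ) ≤ k := by exact_mod_cast hk
      linarith
    have := Real.log_lt_log (by positivity) (sq_lt_exp_add_mul_exp_neg_add hm)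
    rwa [sub_add_cancel, Real.log_pow, Real.log_mul (by positivity) (by positivity)] at this
  have hsum : ∑ i, r i = 0 := by
    have hprod : (∑ i, r i) * (2 * Real.log k -
        (Real.log (Real.exp 1 + (k - 1)) + Real.log (Real.exp (-1) + (k - 1)))) = 0 := by
      linear_combination hsingle 0 1 + hsingle 0 (-1)
    exact (mul_eq_zero.mp hprod).resolve_right (by linarith)
  funext j
  simpa [hsum] using hsingle j 1

lemma eq_of_sub_columns_const {k : ℕ} {A A' : Matrix (Fin k) (Fin k) ℝ}
    (hA : ∀ i j, 0 ≤ A i j) (hA' : ∀ i j, 0 ≤ A' i j)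
    (hAz : ∀ j, ∃ i, A i j = 0) (hA'z : ∀ j, ∃ i, A' i j = 0)
    (h : ∀ i i' j, A i j - A' i j = A i' j - A' i' j) : A = A' := by
  ext i j
  obtain ⟨i₁, hi₁⟩ := hAz j
  obtain ⟨i₂, hi₂⟩ := hA'z j
  linarith [h i i₁ j, h i i₂ j, hA' i₁ j, hA i₂ j]

/-- The canonical parametrisation of the Dirichlet calibration family is
unique: a non-negative matrix with a zero in each column together with a
strictly positive simplex vector is uniquely determined by the calibration map. -/
theorem canonical_parametrisation_unique {k : ℕ} (hk : 2 ≤ k)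
    (A A' : Matrix (Fin k) (Fin k) ℝ)
    (hA : ∀ i j, 0 ≤ A i j) (hA' : ∀ i j, 0 ≤ A' i j)
    (hAz : ∀ j, ∃ i, A i j = 0) (hA'z : ∀ j, ∃ i, A' i j = 0)
    (c c' : Fin k → ℝ)
    (hc : ∀ i, 0 < c i) (hcs : ∑ i, c i = 1)
    (hc' : ∀ i, 0 < c' i) (hcs' : ∑ i, c' i = 1)
    (heq : ∀ q : Fin k → ℝ, (∀ i, 0 < q i) → (∑ i, q i = 1) →
      softmax (A.mulVec (fun i => Real.log ((k : ℝ) * q i)) + fun i => Real.log (c i)) =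
      softmax (A'.mulVec (fun i => Real.log ((k : ℝ) * q i)) + fun i => Real.log (c' i))) :
    A = A' ∧ c = c' := by
  have hk₀ : (k : ℝ) ≠ 0 := by positivity
  obtain rfl : c = c' := by
    have h := heq (fun _ => 1 / k) (fun _ => by positivity) (by simp [hk₀])
    simpa [mul_inv_cancel₀ hk₀, ← Pi.zero_def, softmax_log hc hcs, softmax_log hc' hcs'] using h
  refine ⟨eq_of_sub_columns_const hA hA' hAz hA'z fun i i' j => ?_, rfl⟩
  have hrows : A i - A' i - (A i' - A' i') = 0 :=
    eq_zero_of_dotProduct_log_eq_zero hk _ fun q hq hqs => by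
      obtain ⟨a, ha⟩ := exists_eq_add_const_of_softmax_eq (heq q hq hqs)
      simp only [Pi.add_apply, mulVec] at ha
      simp only [sub_dotProduct]
      linarith [ha i, ha i']
  simpa [sub_eq_zero] using congrFun hrows j
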